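/- When a change of smoothing at one crossing merges two state circles into one, the merge of two d-circles or of two h-circles always produces a d-circle, and the merge of a d-circle with an h-circle always produces an h-circle. (Arithmetically: if the merged circle has b₁ + b₂ ± 2 break points where b₁, b₂ are the break-point numbers of the two circles, then half of its break-point number is even iff exactly one of b₁/2, b₂/2 is odd.) For closed braids, under the identification of d-circles with contractible circles and h-circles with non-contractible circles in the solid torus, these merging rules coincide with the merging rules for the annulus of Asaeda–Przytycki–Sikora. -/

import Mathlib

/-- State circles of a Kauffman state of a closed braid diagram:
* `breaks c` is the (even) number of break points on the circle `c`; a circle is of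
  type d if `breaks c / 2` is odd and of type h otherwise;
* `contractible c` means `c` is contractible in the solid torus;
* `Merge c₁ c₂ c` means that changing the smoothing at a crossing merges the two
  distinct state circles `c₁`, `c₂` into the single circle `c`; this changes the total
  number of break points by 2 (field `merge_breaks`);
* `contractible_iff` is the identification of d-circles with contractible circles (and
  hence of h-circles with non-contractible circles) for closed braids. -/
structure MergeSetting where
  Circle : Type
  breaks : Circle → ℕ
  breaks_even : ∀ c, Even (breaks c)
  contractible : Circle → Prop
  Merge : Circle → Circle → Circle → Prop
  merge_breaks : ∀ {c₁ c₂ c}, Merge c₁ c₂ c →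
    breaks c = breaks c₁ + breaks c₂ + 2 ∨ breaks c + 2 = breaks c₁ + breaks c₂
  contractible_iff : ∀ c, contractible c ↔ Odd (breaks c / 2)

/-! Halving an even break-point count turns the change by `2` into a change of the half by `1`,
which flips its parity: `b / 2 ≡ b₁ / 2 + b₂ / 2 + 1 (mod 2)`. -/

theorem Nat.odd_half_iff_of_merge {b₁ b₂ b : ℕ} (h₁ : Even b₁) (h₂ : Even b₂)
    (hb : b = b₁ + b₂ + 2 ∨ b + 2 = b₁ + b₂) :
    Odd (b / 2) ↔ (Odd (b₁ / 2) ↔ Odd (b₂ / 2)) := by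
  have hhalf : b / 2 = b₁ / 2 + b₂ / 2 + 1 ∨ b / 2 + 1 = b₁ / 2 + b₂ / 2 := by
    obtain ⟨k₁, rfl⟩ := h₁
    obtain ⟨k₂, rfl⟩ := h₂
    omega
  rcases hhalf with h | h <;> have := congrArg Odd h <;>
    simp only [Nat.odd_add, Nat.odd_add_one, ← Nat.not_odd_iff_even, eq_iff_iff] at this <;>
    tauto

theorem Nat.even_half_iff_xor_of_merge {b₁ b₂ b : ℕ} (h₁ : Even b₁) (h₂ : Even b₂)
    (hb : b = b₁ + b₂ + 2 ∨ b + 2 = b₁ + b₂) :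
    Even (b / 2) ↔ Xor (Odd (b₁ / 2)) (Odd (b₂ / 2)) := by
  rw [xor_iff_not_iff, ← Nat.odd_half_iff_of_merge h₁ h₂ hb, Nat.not_odd_iff_even]

theorem MergeSetting.odd_half_breaks_iff_of_merge (M : MergeSetting) {c₁ c₂ c : M.Circle}
    (h : M.Merge c₁ c₂ c) :
    Odd (M.breaks c / 2) ↔ (Odd (M.breaks c₁ / 2) ↔ Odd (M.breaks c₂ / 2)) :=
  Nat.odd_half_iff_of_merge (M.breaks_even c₁) (M.breaks_even c₂) (M.merge_breaks h)

theorem merging_rules (M : MergeSetting) :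
    -- merging rules: d·d ↦ d, h·h ↦ d, d·h ↦ h
    (∀ c₁ c₂ c, M.Merge c₁ c₂ c →
      (Odd (M.breaks c / 2) ↔ (Odd (M.breaks c₁ / 2) ↔ Odd (M.breaks c₂ / 2))))
    -- the arithmetic form
    ∧ (∀ b₁ b₂ b : ℕ, Even b₁ → Even b₂ →
        (b = b₁ + b₂ + 2 ∨ b + 2 = b₁ + b₂) →
        (Even (b / 2) ↔ Xor' (Odd (b₁ / 2)) (Odd (b₂ / 2))))
    -- coincidence with the Asaeda–Przytycki–Sikora merging rules for the annulus
    ∧ (∀ c₁ c₂ c, M.Merge c₁ c₂ c →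
        (M.contractible c ↔ (M.contractible c₁ ↔ M.contractible c₂))) := by
  refine ⟨fun _ _ _ h ↦ M.odd_half_breaks_iff_of_merge h,
    fun _ _ _ h₁ h₂ hb ↦ Nat.even_half_iff_xor_of_merge h₁ h₂ hb, fun _ _ _ h ↦ ?_⟩
  simpa only [M.contractible_iff] using M.odd_half_breaks_iff_of_merge h
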